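/- arXiv:2306.15293 — 8 statements merged into one kernel-verified Lean document; each statement's English description precedes it below -/
import Mathlib

section
/- Let n ≥ 2 and let K, T ⊆ ℝⁿ be compact sets each with connected boundary, with vol(K) ≥ vol(T). Then K + T = K + ∂T. -/
open MeasureTheory Pointwise

theorem sum_eq_sum_with_frontier (n : ℕ) (hn : 2 ≤ n)
    (K T : Set (EuclideanSpace ℝ (Fin n)))
    (hK : IsCompact K) (hT : IsCompact T)
    (hbK : IsConnected (frontier K)) (hbT : IsConnected (frontier T))
    (hvol : volume T ≤ volume K) :
    K + T = K + frontier T := by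
  classical
  have hE : True := trivial
  haveI : Nonempty (Fin n) := ⟨⟨0, by omega⟩⟩
  have hTc : IsClosed T := hT.isClosed
  have hKc : IsClosed K := hK.isClosed
  -- ⊇ direction
  apply Set.Subset.antisymm
  swap
  · exact Set.add_subset_add_left hTc.frontier_subset
  intro z hz
  rw [Set.mem_add] at hz
  obtain ⟨k₀, hk₀, t₀, ht₀, hzk⟩ := hz
  by_contra hc
  -- the map f x = z - x, an involutive homeomorphism
  set f : EuclideanSpace ℝ (Fin n) → EuclideanSpace ℝ (Fin n) := fun x => z - x with hfdef
  have hfinv : ∀ x : EuclideanSpace ℝ (Fin n), f (f x) = x := fun x => by simp [hfdef]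
  have h : EuclideanSpace ℝ (Fin n) ≃ₜ EuclideanSpace ℝ (Fin n) := (Homeomorph.neg (EuclideanSpace ℝ (Fin n))).trans (Homeomorph.addLeft z)
  set F : Set (EuclideanSpace ℝ (Fin n)) := f '' T with hFdef
  have hFpre : F = f ⁻¹' T := by
    ext x
    constructor
    · rintro ⟨t, ht, rfl⟩
      simpa [Set.mem_preimage, hfinv] using ht
    · intro hx
      exact ⟨f x, hx, hfinv x⟩
  -- basic facts about F
  have hfcont : Continuous f := by
    have : f = fun x => z + (-x) := by funext x; simp [hfdef, sub_eq_add_neg]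
    rw [this]; fun_prop
  have hFcompact : IsCompact F := hT.image hfcont
  have hFclosed : IsClosed F := hFcompact.isClosed
  have hhom : ∃ g : EuclideanSpace ℝ (Fin n) ≃ₜ EuclideanSpace ℝ (Fin n), (g : EuclideanSpace ℝ (Fin n) → EuclideanSpace ℝ (Fin n)) = f := by
    refine ⟨(Homeomorph.neg (EuclideanSpace ℝ (Fin n))).trans (Homeomorph.addLeft z), ?_⟩
    funext x
    simp [hfdef, sub_eq_add_neg]
  obtain ⟨g, hg⟩ := hhom
  have hFrontF : frontier F = f '' frontier T := by
    rw [hFdef, ← hg, g.image_frontier]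
  -- K misses frontier F
  have hKfront : K ∩ frontier F = ∅ := by
    rw [Set.eq_empty_iff_forall_notMem]
    rintro x ⟨hxK, hxf⟩
    rw [hFrontF] at hxf
    obtain ⟨b, hb, rfl⟩ := hxf
    exact hc (Set.mem_add.2 ⟨f b, hxK, b, hb, by simp [hfdef]⟩)
  -- k₀ ∈ K ∩ F
  have hk₀F : k₀ ∈ F := ⟨t₀, ht₀, by rw [hfdef]; simp [← hzk]⟩
  -- frontier K misses frontier F, so by connectedness it's in int F or in Fᶜ
  have hsub : frontier K ⊆ interior F ∪ Fᶜ := by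
    intro x hx
    have hxK : x ∈ K := hKc.frontier_subset hx
    by_cases hxF : x ∈ F
    · left
      have : x ∉ frontier F := fun hf => (Set.eq_empty_iff_forall_notMem.1 hKfront x) ⟨hxK, hf⟩
      have := hFclosed.frontier_eq ▸ this
      simp only [Set.mem_diff, not_and, not_not] at this
      exact this hxF
    · right; exact hxF
  have hdisj : Disjoint (interior F) Fᶜ :=
    Set.disjoint_compl_right_iff_subset.2 interior_subset
  have hcase := hbK.isPreconnected.subset_or_subset isOpen_interior hFclosed.isOpen_compl
    hdisj hsub
  -- a nonempty bounded clopen set is impossible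
  have no_clopen : ∀ S : Set (EuclideanSpace ℝ (Fin n)), IsOpen S → IsClosed S → S.Nonempty →
      Bornology.IsBounded S → False := by
    intro S hSo hSc hSne hSb
    rcases isClopen_iff.1 ⟨hSc, hSo⟩ with h | h
    · rw [h] at hSne; exact Set.not_nonempty_empty hSne
    · rw [h] at hSb
      exact NormedSpace.unbounded_univ ℝ (EuclideanSpace ℝ (Fin n)) hSb
  -- in either case every point of K ∩ F is in interior K ∩ interior F, etc.
  have hKnotfrontF : ∀ x ∈ K, x ∉ frontier F := fun x hx hf =>
    (Set.eq_empty_iff_forall_notMem.1 hKfront x) ⟨hx, hf⟩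
  have hKF_int : ∀ x ∈ K, x ∈ F → x ∈ interior F := by
    intro x hx hxF
    have := hKnotfrontF x hx
    rw [hFclosed.frontier_eq] at this
    simp only [Set.mem_diff, not_and, not_not] at this
    exact this hxF
  rcases hcase with hcase | hcase
  · -- Case B: frontier K ⊆ interior F; show K ⊆ interior F, then volume contradiction
    have hKint : ∀ x ∈ K, x ∉ F → x ∈ interior K := by
      intro x hx hxF
      have hxnf : x ∉ frontier K := fun hf => hxF (interior_subset (hcase hf))
      rw [hKc.frontier_eq] at hxnf
      simp only [Set.mem_diff, not_and, not_not] at hxnf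
      exact hxnf hx
    -- S := K \ F is clopen and bounded, hence empty
    have hKsubF : K ⊆ F := by
      by_contra hns
      rw [Set.not_subset] at hns
      obtain ⟨p, hpK, hpF⟩ := hns
      have hSeq : K \ F = interior K ∩ Fᶜ := by
        apply Set.Subset.antisymm
        · rintro x ⟨hx1, hx2⟩
          exact ⟨hKint x hx1 hx2, hx2⟩
        · rintro x ⟨hx1, hx2⟩
          exact ⟨interior_subset hx1, hx2⟩
      have hSopen : IsOpen (K \ F) := hSeq ▸ isOpen_interior.inter hFclosed.isOpen_compl
      have hSclosed : IsClosed (K \ F) := by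
        have hcl : closure (K \ F) ⊆ K \ F := by
          intro x hx
          have hxK : x ∈ K := hKc.closure_subset (closure_mono Set.diff_subset hx)
          refine ⟨hxK, ?_⟩
          intro hxF
          have hxint : x ∈ interior F := hKF_int x hxK hxF
          obtain ⟨y, hy, hyKF⟩ := mem_closure_iff.1 hx (interior F) isOpen_interior hxint
          exact hyKF.2 (interior_subset hy)
        exact isClosed_of_closure_subset hcl
      exact no_clopen (K \ F) hSopen hSclosed ⟨p, hpK, hpF⟩
        (hK.isBounded.subset Set.diff_subset)
    have hKsubintF : K ⊆ interior F := fun x hx => hKF_int x hx (hKsubF hx)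
    -- volume
    have hvolF : volume F = volume T := by
      rw [hFpre]
      have hmp : MeasurePreserving f volume volume := by
        have : f = fun t => z - t := rfl
        rw [this]
        exact Measure.measurePreserving_sub_left volume z
      exact hmp.measure_preimage hT.measurableSet.nullMeasurableSet
    have hKm : MeasurableSet K := hKc.measurableSet
    have hsplit : volume (interior F) = volume K + volume (interior F \ K) := by
      rw [← measure_diff_add_inter (interior F) hKm, Set.inter_eq_right.2 hKsubintF, add_comm]
    have hle : volume (interior F) ≤ volume K := by
      calc volume (interior F) ≤ volume F := measure_mono interior_subset
        _ = volume T := hvolF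
        _ ≤ volume K := hvol
    have hKfin : volume K < ⊤ := hK.measure_lt_top
    have hzero : volume (interior F \ K) = 0 := by
      by_contra hne
      have hpos : 0 < volume (interior F \ K) := pos_iff_ne_zero.2 hne
      have : volume K < volume K + volume (interior F \ K) :=
        ENNReal.lt_add_right hKfin.ne hne
      rw [← hsplit] at this
      exact absurd hle (not_le.2 this)
    have hopen : IsOpen (interior F \ K) := isOpen_interior.sdiff hKc
    have hempty : interior F \ K = ∅ := by
      by_contra hne
      exact (hopen.measure_pos volume (Set.nonempty_iff_ne_empty.2 hne)).ne' hzero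
    have hKeq : K = interior F := by
      apply Set.Subset.antisymm hKsubintF
      intro x hx
      by_contra hxK
      exact Set.eq_empty_iff_forall_notMem.1 hempty x ⟨hx, hxK⟩
    exact no_clopen K (hKeq ▸ isOpen_interior) hKc ⟨k₀, hk₀⟩ hK.isBounded
  · -- Case A: frontier K ∩ F = ∅; then K ∩ F = interior K ∩ interior F is clopen nonempty bounded
    have hKint : ∀ x ∈ K, x ∈ F → x ∈ interior K := by
      intro x hx hxF
      have hxnf : x ∉ frontier K := fun hf => (hcase hf) hxF
      rw [hKc.frontier_eq] at hxnf
      simp only [Set.mem_diff, not_and, not_not] at hxnf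
      exact hxnf hx
    have hSeq : K ∩ F = interior K ∩ interior F := by
      apply Set.Subset.antisymm
      · rintro x ⟨hx1, hx2⟩
        exact ⟨hKint x hx1 hx2, hKF_int x hx1 hx2⟩
      · rintro x ⟨hx1, hx2⟩
        exact ⟨interior_subset hx1, interior_subset hx2⟩
    exact no_clopen (K ∩ F) (hSeq ▸ isOpen_interior.inter isOpen_interior)
      (hKc.inter hFclosed) ⟨k₀, hk₀, hk₀F⟩ (hK.isBounded.subset Set.inter_subset_left)
end

section
/- Let n ≥ 2 and let K, T ⊆ ℝⁿ be compact sets each with connected boundary, with vol(K) ≥ vol(T). Then K + T = (∂K + ∂T) ∪ (K ⊖ T), and moreover this union is disjoint, i.e., (∂K + ∂T) ∩ (K ⊖ T) = ∅. -/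
open MeasureTheory Pointwise

/-- The Minkowski difference `A ⊖ B = {x : x − B ⊆ int(A)}`. -/
def minkDiff {n : ℕ} (A B : Set (EuclideanSpace ℝ (Fin n))) :
    Set (EuclideanSpace ℝ (Fin n)) :=
  {x | ∀ b ∈ B, x - b ∈ interior A}

section Aux

variable {E : Type*} [NormedAddCommGroup E] [NormedSpace ℝ E]

/-- A preconnected set disjoint from the frontier of `t` lies in the interior of `t`
or in the complement of its closure. -/
lemma aux_sep {X : Type*} [TopologicalSpace X] {s t : Set X} (hs : IsPreconnected s)
    (hd : ∀ y ∈ s, y ∉ frontier t) : s ⊆ interior t ∨ s ⊆ (closure t)ᶜ := by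
  refine hs.subset_or_subset isOpen_interior (isClosed_closure.isOpen_compl) ?_ ?_
  · rw [Set.disjoint_left]
    intro a ha ha'
    exact ha' (subset_closure (interior_subset ha))
  · intro y hy
    by_cases h1 : y ∈ interior t
    · exact Or.inl h1
    · by_cases h2 : y ∈ closure t
      · exact absurd (show y ∈ frontier t from ⟨h2, h1⟩) (hd y hy)
      · exact Or.inr h2

/-- First exit of a ray from a point of a compact set: there is `r' ≥ 0` with
`t + r' • v` on the frontier, and the whole initial segment inside the set. -/
lemma aux_ray {T : Set E} (hT : IsCompact T) {t : E} (ht : t ∈ T) {v : E} (hv : v ≠ 0) :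
    ∃ r' : ℝ, 0 ≤ r' ∧ t + r' • v ∈ frontier T ∧ ∀ r, 0 ≤ r → r ≤ r' → t + r • v ∈ T := by
  have hTc : IsClosed T := hT.isClosed
  obtain ⟨R, hR⟩ := hT.isBounded.subset_closedBall t
  have hvpos : 0 < ‖v‖ := norm_pos_iff.mpr hv
  set g : ℝ → E := fun r => t + r • v with hg
  have hgc : Continuous g := by continuity
  set S : Set ℝ := {r | 0 ≤ r ∧ g r ∉ T} with hS
  have hR0 : (0:ℝ) ≤ R := by simpa using hR ht
  have hSne : S.Nonempty := by
    refine ⟨(R + 1) / ‖v‖, by positivity, ?_⟩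
    intro hmem
    have := hR hmem
    have hd : dist (g ((R + 1) / ‖v‖)) t = R + 1 := by
      have : g ((R + 1) / ‖v‖) - t = ((R + 1) / ‖v‖) • v := by simp [hg]
      rw [dist_eq_norm, this, norm_smul, Real.norm_eq_abs,
        abs_of_nonneg (by positivity : (0:ℝ) ≤ (R + 1) / ‖v‖), div_mul_cancel₀]
      exact ne_of_gt hvpos
    rw [Metric.mem_closedBall, hd] at this
    linarith
  have hSbdd : BddBelow S := ⟨0, fun r hr => hr.1⟩
  set r' := sInf S with hr'
  have hr'0 : 0 ≤ r' := le_csInf hSne fun r hr => hr.1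
  have hin : ∀ r, 0 ≤ r → r < r' → g r ∈ T := by
    intro r h0 hlt
    by_contra hout
    exact absurd (csInf_le hSbdd ⟨h0, hout⟩) (not_le.mpr hlt)
  have hgr' : g r' ∈ T := by
    rcases eq_or_lt_of_le hr'0 with h | h
    · simpa [hg, ← h] using ht
    · have hmem : g r' ∈ closure T := by
        rw [Metric.mem_closure_iff]
        intro ε hε
        set δ := min r' (ε / (2 * ‖v‖)) with hδ
        have hδpos : 0 < δ := lt_min h (by positivity)
        have hδr' : δ ≤ r' := min_le_left _ _
        have hδε : δ ≤ ε / (2 * ‖v‖) := min_le_right _ _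
        refine ⟨g (r' - δ), hin _ (by linarith) (by linarith), ?_⟩
        have hdiff : g r' - g (r' - δ) = δ • v := by
          simp only [hg]; rw [sub_smul]; abel
        rw [dist_eq_norm, hdiff, norm_smul, Real.norm_eq_abs, abs_of_pos hδpos]
        calc δ * ‖v‖ ≤ (ε / (2 * ‖v‖)) * ‖v‖ := mul_le_mul_of_nonneg_right hδε hvpos.le
        _ = ε / 2 := by field_simp
        _ < ε := by linarith
      rwa [hTc.closure_eq] at hmem
  have hcl : g r' ∈ closure Tᶜ := by
    rw [Metric.mem_closure_iff]
    intro ε hε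
    have hnotlb : ¬ (r' + ε / ‖v‖) ≤ sInf S := by
      have : 0 < ε / ‖v‖ := by positivity
      linarith [le_refl r']
    obtain ⟨e, heS, helt⟩ : ∃ e ∈ S, e < r' + ε / ‖v‖ := by
      by_contra hcon
      push_neg at hcon
      exact hnotlb (le_csInf hSne hcon)
    refine ⟨g e, heS.2, ?_⟩
    have hle : r' ≤ e := csInf_le hSbdd heS
    have : g r' - g e = (r' - e) • v := by
      simp only [hg]; rw [sub_smul]; abel
    rw [dist_eq_norm, this, norm_smul, Real.norm_eq_abs, abs_of_nonpos (by linarith)]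
    calc -(r' - e) * ‖v‖ = (e - r') * ‖v‖ := by ring
    _ < (ε / ‖v‖) * ‖v‖ := mul_lt_mul_of_pos_right (by linarith) hvpos
    _ = ε := div_mul_cancel₀ _ (ne_of_gt hvpos)
  refine ⟨r', hr'0, ?_, ?_⟩
  · rw [frontier_eq_closure_inter_closure]
    exact ⟨subset_closure hgr', hcl⟩
  · intro r h0 hle
    rcases eq_or_lt_of_le hle with h | h
    · exact h ▸ hgr'
    · exact hin r h0 h

/-- Crossing lemma: if some point `x - s` (`s ∈ T`) is outside `interior W` but the frontier
of `T` is mapped into `interior W`, then some point of `T` is mapped to the frontier of `W`. -/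
lemma aux_cross [Nontrivial E] {T W : Set E} (hT : IsCompact T) (x s : E) (hs : s ∈ T)
    (hxs : x - s ∉ interior W) (hsafe : ∀ b ∈ frontier T, x - b ∈ interior W) :
    ∃ c ∈ T, x - c ∈ frontier W := by
  obtain ⟨v, hv⟩ := exists_ne (0 : E)
  obtain ⟨r', hr'0, hfr, hseg⟩ := aux_ray hT hs hv
  set f : ℝ → E := fun r => x - (s + r • v) with hf
  have hfc : Continuous f := by continuity
  have h0 : f 0 ∉ interior W := by simpa [hf] using hxs
  have h1 : f r' ∈ interior W := hsafe _ hfr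
  -- the image of [0, r'] is preconnected
  have hpre : IsPreconnected (f '' Set.Icc 0 r') :=
    (isPreconnected_Icc).image f hfc.continuousOn
  have hfront : ∃ r ∈ Set.Icc (0:ℝ) r', f r ∈ frontier (interior W) := by
    by_contra hcon
    push_neg at hcon
    have hd : ∀ y ∈ f '' Set.Icc 0 r', y ∉ frontier (interior W) := by
      rintro y ⟨r, hr, rfl⟩ hy
      exact hcon r hr hy
    rcases aux_sep hpre hd with hsub | hsub
    · have := hsub ⟨0, Set.left_mem_Icc.mpr hr'0, rfl⟩
      rw [interior_interior] at this
      exact h0 this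
    · exact (hsub ⟨r', Set.right_mem_Icc.mpr hr'0, rfl⟩) (subset_closure h1)
  obtain ⟨r, hr, hfr2⟩ := hfront
  exact ⟨s + r • v, hseg r hr.1 hr.2, frontier_interior_subset hfr2⟩

/-- Two nonempty compact sets cannot each have their frontier inside the other's interior. -/
lemma aux_swallow [Nontrivial E] {S K : Set E} (hS : IsCompact S) (hK : IsCompact K)
    (hSne : S.Nonempty) (h1 : frontier S ⊆ interior K) (h2 : frontier K ⊆ interior S) :
    False := by
  set D := S ∪ K with hD
  have hDc : IsCompact D := hS.union hK
  have hfr : frontier D = ∅ := by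
    rw [Set.eq_empty_iff_forall_notMem]
    intro y hy
    have hsub : frontier D ⊆ interior D := by
      refine (frontier_union_subset S K).trans ?_
      rintro z (hz | hz)
      · exact interior_mono Set.subset_union_right (h1 hz.1)
      · exact interior_mono Set.subset_union_left (h2 hz.2)
    exact hy.2 (hsub hy)
  have hclopen : IsClopen D := by
    constructor
    · exact hDc.isClosed
    · rw [← interior_eq_iff_isOpen]
      refine subset_antisymm interior_subset ?_
      intro y hy
      by_contra hni
      exact (Set.eq_empty_iff_forall_notMem.mp hfr y) ⟨subset_closure hy, hni⟩
  have : D = Set.univ := hclopen.eq_univ (hSne.mono Set.subset_union_left)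
  have : IsCompact (Set.univ : Set E) := this ▸ hDc
  exact (not_compactSpace_iff.mpr inferInstance) (isCompact_univ_iff.mp this)

end Aux

/-- The image of a set under `y ↦ x - y` equals the preimage (the map is an involution). -/
lemma aux_img_eq_preimg {E : Type*} [AddCommGroup E] (x : E) (K : Set E) :
    (fun y => x - y) '' K = (fun y => x - y) ⁻¹' K := by
  ext y
  constructor
  · rintro ⟨k, hk, rfl⟩
    simpa [Set.mem_preimage, sub_sub_cancel] using hk
  · intro hy
    exact ⟨x - y, hy, sub_sub_cancel x y⟩

/-- Volume contradiction: if `x - K ⊆ int T` with `vol T ≤ vol K`, `K` nonempty compact,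
`T` compact, we get a contradiction. -/
lemma aux_vol {n : ℕ} {K T : Set (EuclideanSpace ℝ (Fin n))}
    [Nontrivial (EuclideanSpace ℝ (Fin n))]
    (hK : IsCompact K) (hT : IsCompact T) (hKne : K.Nonempty)
    (hvol : volume T ≤ volume K) (x : EuclideanSpace ℝ (Fin n))
    (h : ∀ k ∈ K, x - k ∈ interior T) : False := by
  classical
  set S : Set (EuclideanSpace ℝ (Fin n)) := (fun y => x - y) '' K with hSdef
  have hScompact : IsCompact S := hK.image (by continuity)
  have hSsub : S ⊆ interior T := by
    rintro y ⟨k, hk, rfl⟩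
    exact h k hk
  have hSvol : volume S = volume K := by
    rw [hSdef, aux_img_eq_preimg]
    have hcomp : (fun y : EuclideanSpace ℝ (Fin n) => x - y) = (fun y => x + y) ∘ Neg.neg := by
      funext y; simp [sub_eq_add_neg]
    rw [hcomp, Set.preimage_comp,
      show (Neg.neg ⁻¹' ((fun y => x + y) ⁻¹' K) : Set _) = -((fun y => x + y) ⁻¹' K) from rfl,
      Measure.measure_neg, measure_preimage_add]
  have hTfin : volume T ≠ ⊤ := hT.measure_lt_top.ne
  have hintle : volume (interior T) ≤ volume S := by
    calc volume (interior T) ≤ volume T := measure_mono interior_subset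
    _ ≤ volume K := hvol
    _ = volume S := hSvol.symm
  have hdiff0 : volume (interior T \ S) = 0 := by
    have hSfin : volume S ≠ ⊤ := hScompact.measure_lt_top.ne
    rw [measure_diff hSsub hScompact.isClosed.measurableSet.nullMeasurableSet hSfin]
    exact tsub_eq_zero_of_le hintle
  have hopen : IsOpen (interior T \ S) := isOpen_interior.sdiff hScompact.isClosed
  have hempty : interior T \ S = ∅ := hopen.eq_empty_of_measure_zero hdiff0
  have hSeq : S = interior T :=
    subset_antisymm hSsub (fun y hy => by_contra fun hns => (Set.eq_empty_iff_forall_notMem.mp hempty y) ⟨hy, hns⟩)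
  have hclopen : IsClopen S := ⟨hScompact.isClosed, hSeq ▸ isOpen_interior⟩
  have hSne : S.Nonempty := hKne.image _
  have huniv : S = Set.univ := hclopen.eq_univ hSne
  have : IsCompact (Set.univ : Set (EuclideanSpace ℝ (Fin n))) := huniv ▸ hScompact
  exact (not_compactSpace_iff.mpr inferInstance) (isCompact_univ_iff.mp this)

theorem sum_decomposition (n : ℕ) (hn : 2 ≤ n)
    (K T : Set (EuclideanSpace ℝ (Fin n)))
    (hK : IsCompact K) (hT : IsCompact T)
    (hbK : IsConnected (frontier K)) (hbT : IsConnected (frontier T))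
    (hvol : volume T ≤ volume K) :
    K + T = (frontier K + frontier T) ∪ minkDiff K T ∧
      (frontier K + frontier T) ∩ minkDiff K T = ∅ := by
  haveI : Nonempty (Fin n) := ⟨⟨0, by omega⟩⟩
  haveI : Nontrivial (EuclideanSpace ℝ (Fin n)) := inferInstance
  have hKc : IsClosed K := hK.isClosed
  have hTc : IsClosed T := hT.isClosed
  have hfKsub : frontier K ⊆ K := hKc.frontier_subset
  have hfTsub : frontier T ⊆ T := hTc.frontier_subset
  have hKne : K.Nonempty := hbK.nonempty.mono hfKsub
  have hTne : T.Nonempty := hbT.nonempty.mono hfTsub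
  constructor
  · apply subset_antisymm
    · -- hard direction
      intro x hx
      by_cases hxb : x ∈ frontier K + frontier T
      · exact Or.inl hxb
      -- no boundary representation
      have hsafeKT : ∀ b ∈ frontier T, x - b ∉ frontier K := by
        intro b hb hc
        exact hxb (Set.mem_add.mpr ⟨x - b, hc, b, hb, sub_add_cancel x b⟩)
      have hsafeTK : ∀ a ∈ frontier K, x - a ∉ frontier T := by
        intro a ha hc
        exact hxb (Set.mem_add.mpr ⟨a, ha, x - a, hc, add_sub_cancel a x⟩)
      -- the two connected images
      have hAcase : (∀ b ∈ frontier T, x - b ∈ interior K) ∨ (∀ b ∈ frontier T, x - b ∉ K) := by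
        have hpre : IsPreconnected ((fun b => x - b) '' frontier T) :=
          hbT.isPreconnected.image _ (Continuous.continuousOn (by continuity))
        have hd : ∀ y ∈ (fun b => x - b) '' frontier T, y ∉ frontier K := by
          rintro y ⟨b, hb, rfl⟩
          exact hsafeKT b hb
        rcases aux_sep hpre hd with hsub | hsub
        · exact Or.inl fun b hb => hsub ⟨b, hb, rfl⟩
        · refine Or.inr fun b hb hc => hsub ⟨b, hb, rfl⟩ ?_
          rw [hKc.closure_eq]; exact hc
      have hBcase : (∀ a ∈ frontier K, x - a ∈ interior T) ∨ (∀ a ∈ frontier K, x - a ∉ T) := by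
        have hpre : IsPreconnected ((fun a => x - a) '' frontier K) :=
          hbK.isPreconnected.image _ (Continuous.continuousOn (by continuity))
        have hd : ∀ y ∈ (fun a => x - a) '' frontier K, y ∉ frontier T := by
          rintro y ⟨a, ha, rfl⟩
          exact hsafeTK a ha
        rcases aux_sep hpre hd with hsub | hsub
        · exact Or.inl fun a ha => hsub ⟨a, ha, rfl⟩
        · refine Or.inr fun a ha hc => hsub ⟨a, ha, rfl⟩ ?_
          rw [hTc.closure_eq]; exact hc
      rcases hAcase with hA | hA
      · rcases hBcase with hB | hB
        · -- both interior: impossible by the clopen argument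
          exfalso
          set e : EuclideanSpace ℝ (Fin n) ≃ₜ EuclideanSpace ℝ (Fin n) :=
            Homeomorph.subLeft x with he
          have hecoe : ∀ y, e y = x - y := fun y => rfl
          set S : Set (EuclideanSpace ℝ (Fin n)) := e '' T with hS
          have hScompact : IsCompact S := hT.image e.continuous
          have hSne : S.Nonempty := hTne.image _
          refine aux_swallow hScompact hK hSne ?_ ?_
          · rw [hS, ← e.image_frontier]
            rintro y ⟨b, hb, rfl⟩
            rw [hecoe]
            exact hA b hb
          · rw [hS, ← e.image_interior]
            intro a ha
            refine ⟨x - a, hB a ha, ?_⟩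
            rw [hecoe, sub_sub_cancel]
        · -- A interior, B outside: x ∈ minkDiff K T
          refine Or.inr ?_
          intro b hb
          by_contra hbad
          obtain ⟨c, hc, hcf⟩ := aux_cross hT x b hb hbad hA
          exact hB (x - c) hcf (by rwa [sub_sub_cancel])
      · rcases hBcase with hB | hB
        · -- A outside, B interior: volume contradiction
          exfalso
          refine aux_vol hK hT hKne hvol x ?_
          intro k hk
          by_contra hbad
          obtain ⟨c, hc, hcf⟩ := aux_cross hK x k hk hbad hB
          exact hA (x - c) hcf (by rwa [sub_sub_cancel])
        · -- both outside: contradicts x ∈ K + T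
          exfalso
          obtain ⟨k, hk, t, ht, hsum⟩ := Set.mem_add.mp hx
          have hxt : x - t ∈ K := by
            have : x - t = k := by rw [← hsum]; abel
            rw [this]; exact hk
          have hsafe : ∀ b ∈ frontier T, x - b ∈ interior Kᶜ := by
            intro b hb
            rw [interior_compl, hKc.closure_eq]
            exact hA b hb
          have hxs : x - t ∉ interior Kᶜ := by
            rw [interior_compl, hKc.closure_eq]
            exact fun hcon => hcon hxt
          obtain ⟨c, hc, hcf⟩ := aux_cross hT x t ht hxs hsafe
          rw [frontier_compl] at hcf
          exact hB (x - c) hcf (by rwa [sub_sub_cancel])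
    · -- easy direction
      apply Set.union_subset
      · exact Set.add_subset_add hfKsub hfTsub
      · intro y hy
        obtain ⟨b, hb⟩ := hTne
        have : y - b ∈ K := interior_subset (hy b hb)
        exact Set.mem_add.mpr ⟨y - b, this, b, hb, sub_add_cancel y b⟩
  · -- disjointness
    rw [Set.eq_empty_iff_forall_notMem]
    rintro y ⟨hy1, hy2⟩
    obtain ⟨a, ha, b, hb, hsum⟩ := Set.mem_add.mp hy1
    have hbT : b ∈ T := hfTsub hb
    have hyi : y - b ∈ interior K := hy2 b hbT
    have hya : y - b = a := by rw [← hsum]; abel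
    rw [hya] at hyi
    exact ha.2 hyi
end

section
/- Let n ≥ 2 and let K, T ⊆ ℝⁿ be compact sets each with connected boundary, with vol(K) ≥ vol(T). Then ∂K + ∂T = ∂K + T. -/
open MeasureTheory Pointwise

private lemma frontier_ccIn {X : Type*} [TopologicalSpace X] [LocallyConnectedSpace X]
    {F : Set X} (hF : IsOpen F) (x : X) :
    frontier (connectedComponentIn F x) ⊆ frontier F := by
  intro y hy
  have hD : IsOpen (connectedComponentIn F x) := hF.connectedComponentIn
  have hyD : y ∉ connectedComponentIn F x := by
    intro h
    exact hy.2 (by simpa [hD.interior_eq] using h)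
  have hycl : y ∈ closure (connectedComponentIn F x) := hy.1
  rw [hF.frontier_eq]
  refine ⟨closure_mono (connectedComponentIn_subset F x) hycl, ?_⟩
  intro hyF
  obtain ⟨z, hz1, hz2⟩ := mem_closure_iff.mp hycl (connectedComponentIn F y)
    hF.connectedComponentIn (mem_connectedComponentIn hyF)
  have h1 := connectedComponentIn_eq hz2
  have h2 := connectedComponentIn_eq hz1
  exact hyD (by rw [h1, ← h2]; exact mem_connectedComponentIn hyF)

private lemma key_lemma (n : ℕ) (hn : 0 < n) (K S : Set (EuclideanSpace ℝ (Fin n)))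
    (hK : IsCompact K) (hS : IsCompact S)
    (hbK : IsConnected (frontier K)) (hbS : IsConnected (frontier S))
    (hvol : volume S ≤ volume K)
    {a : EuclideanSpace ℝ (Fin n)} (haK : a ∈ frontier K) (haS : a ∈ S) :
    (frontier K ∩ frontier S).Nonempty := by
  by_contra hdisj
  rw [Set.not_nonempty_iff_eq_empty] at hdisj
  have hKc : IsClosed K := hK.isClosed
  have hSc : IsClosed S := hS.isClosed
  have hanfS : a ∉ frontier S := fun h =>
    (Set.eq_empty_iff_forall_notMem.mp hdisj a) ⟨haK, h⟩
  have haiS : a ∈ interior S := by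
    by_contra h
    exact hanfS (hSc.frontier_eq ▸ ⟨haS, h⟩)
  have hdisjS : Disjoint (interior S) Sᶜ :=
    disjoint_compl_right.mono_left interior_subset
  have hdisjK : Disjoint (interior K) Kᶜ :=
    disjoint_compl_right.mono_left interior_subset
  -- the frontier of K is inside the interior of S
  have hcover : frontier K ⊆ interior S ∪ Sᶜ := by
    intro x hx
    by_cases hxS : x ∈ S
    · left
      by_contra h
      exact (Set.eq_empty_iff_forall_notMem.mp hdisj x) ⟨hx, hSc.frontier_eq ▸ ⟨hxS, h⟩⟩
    · exact Or.inr hxS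
  have hbKiS : frontier K ⊆ interior S :=
    hbK.isPreconnected.subset_left_of_subset_union isOpen_interior hSc.isOpen_compl
      hdisjS hcover ⟨a, haK, haiS⟩
  -- a far away point p
  obtain ⟨R, hR⟩ := (hK.union hS).isBounded.subset_closedBall 0
  set p : EuclideanSpace ℝ (Fin n) := EuclideanSpace.single ⟨0, hn⟩ (|R| + 1) with hp
  have hpn : p ∉ Metric.closedBall (0 : EuclideanSpace ℝ (Fin n)) R := by
    rw [Metric.mem_closedBall, dist_zero_right, hp, EuclideanSpace.norm_single,
      Real.norm_eq_abs, abs_of_nonneg (by positivity : (0:ℝ) ≤ |R| + 1)]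
    have : R ≤ |R| := le_abs_self R
    linarith
  have hpK : p ∉ K := fun h => hpn (hR (Or.inl h))
  have hpS : p ∉ S := fun h => hpn (hR (Or.inr h))
  -- the unbounded-side connected component of Kᶜ
  set U := connectedComponentIn Kᶜ p with hUdef
  have hUopen : IsOpen U := hKc.isOpen_compl.connectedComponentIn
  have hpU : p ∈ U := mem_connectedComponentIn hpK
  have hUsub : U ⊆ Kᶜ := connectedComponentIn_subset _ _
  have hfU : frontier U ⊆ frontier K := by
    have := frontier_ccIn hKc.isOpen_compl p
    rwa [frontier_compl] at this
  have hfUiS : frontier U ⊆ interior S := hfU.trans hbKiS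
  have hfUne : (frontier U).Nonempty := by
    rw [nonempty_frontier_iff]
    refine ⟨⟨p, hpU⟩, ?_⟩
    intro h
    have : a ∈ U := h ▸ Set.mem_univ a
    exact (hUsub this) (hKc.frontier_subset haK)
  -- case split on the position of frontier S
  have hcover2 : frontier S ⊆ interior K ∪ Kᶜ := by
    intro x hx
    by_cases hxK : x ∈ K
    · left
      by_contra h
      exact (Set.eq_empty_iff_forall_notMem.mp hdisj x) ⟨hKc.frontier_eq ▸ ⟨hxK, h⟩, hx⟩
    · exact Or.inr hxK
  rcases hbS.isPreconnected.subset_or_subset isOpen_interior hKc.isOpen_compl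
      hdisjK hcover2 with hS1 | hS2
  · -- Case 1 : frontier S ⊆ interior K.  Then U avoids S, contradicting frontier U ⊆ int S.
    have hUS : U ⊆ Sᶜ := by
      refine isPreconnected_connectedComponentIn.subset_right_of_subset_union
        isOpen_interior hSc.isOpen_compl hdisjS ?_ ⟨p, hpU, hpS⟩
      intro x hxU
      by_cases hxS : x ∈ S
      · left
        by_contra h
        have hxf : x ∈ frontier S := hSc.frontier_eq ▸ ⟨hxS, h⟩
        exact (hUsub hxU) (interior_subset (hS1 hxf))
      · exact Or.inr hxS
    obtain ⟨y, hy⟩ := hfUne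
    have hyiS : y ∈ interior S := hfUiS hy
    obtain ⟨z, hz1, hz2⟩ := mem_closure_iff.mp hy.1 (interior S) isOpen_interior hyiS
    exact (hUS hz2) (interior_subset hz1)
  · -- Case 2 : frontier S ∩ K = ∅.  Then K ⊆ S and vol S > vol K, a contradiction.
    have hKS : K ⊆ S := by
      intro x hxK
      by_contra hxS
      have hxiK : x ∈ interior K := by
        by_contra h
        have hxf : x ∈ frontier K := hKc.frontier_eq ▸ ⟨hxK, h⟩
        exact hxS (interior_subset (hbKiS hxf))
      set D := connectedComponentIn Sᶜ x with hDdef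
      have hDopen : IsOpen D := hSc.isOpen_compl.connectedComponentIn
      have hDsub : D ⊆ Sᶜ := connectedComponentIn_subset _ _
      have hxD : x ∈ D := mem_connectedComponentIn hxS
      have hDiK : D ⊆ interior K := by
        refine isPreconnected_connectedComponentIn.subset_left_of_subset_union
          isOpen_interior hKc.isOpen_compl hdisjK ?_ ⟨x, hxD, hxiK⟩
        intro z hzD
        by_cases hzK : z ∈ K
        · left
          by_contra h
          have hzf : z ∈ frontier K := hKc.frontier_eq ▸ ⟨hzK, h⟩
          exact (hDsub hzD) (interior_subset (hbKiS hzf))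
        · exact Or.inr hzK
      have hfD : frontier D ⊆ Kᶜ := by
        have h1 : frontier D ⊆ frontier S := by
          have := frontier_ccIn hSc.isOpen_compl x
          rwa [frontier_compl] at this
        exact h1.trans hS2
      have hfD2 : frontier D ⊆ K := fun z hz =>
        closure_minimal (hDiK.trans interior_subset) hKc (frontier_subset_closure hz)
      have hfDe : frontier D = ∅ :=
        Set.eq_empty_iff_forall_notMem.mpr fun z hz => (hfD hz) (hfD2 hz)
      rw [frontier_eq_empty_iff] at hfDe
      rcases hfDe with h | h
      · rw [h] at hxD; exact hxD
      · have : p ∈ D := h ▸ Set.mem_univ p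
        exact hpK (interior_subset (hDiK this))
    -- volume contradiction
    obtain ⟨y, hy⟩ := hfUne
    have hyiS : y ∈ interior S := hfUiS hy
    have hne : (U ∩ interior S).Nonempty := by
      obtain ⟨z, hz1, hz2⟩ := mem_closure_iff.mp hy.1 (interior S) isOpen_interior hyiS
      exact ⟨z, hz2, hz1⟩
    have hVpos : 0 < volume (U ∩ interior S) :=
      (hUopen.inter isOpen_interior).measure_pos volume hne
    have hVsub : U ∩ interior S ⊆ S \ K := fun z hz => ⟨interior_subset hz.2, hUsub hz.1⟩
    have h1 : volume K + volume (S \ K) = volume S := by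
      have := measure_inter_add_diff (μ := volume) S hKc.measurableSet
      rwa [Set.inter_eq_right.mpr hKS] at this
    have h2 : volume K < volume S := by
      rw [← h1]
      exact ENNReal.lt_add_right hK.measure_lt_top.ne
        (hVpos.trans_le (measure_mono hVsub)).ne'
    exact absurd hvol (not_le.mpr h2)

theorem frontier_sum_eq_frontier_add_set (n : ℕ) (hn : 2 ≤ n)
    (K T : Set (EuclideanSpace ℝ (Fin n)))
    (hK : IsCompact K) (hT : IsCompact T)
    (hbK : IsConnected (frontier K)) (hbT : IsConnected (frontier T))
    (hvol : volume T ≤ volume K) :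
    frontier K + frontier T = frontier K + T := by
  have hn0 : 0 < n := by omega
  apply Set.Subset.antisymm
  · exact Set.add_subset_add_left hT.isClosed.frontier_subset
  · rintro x hx
    rw [Set.mem_add] at hx
    obtain ⟨a, ha, b, hb, rfl⟩ := hx
    set c := a + b with hc
    let e : EuclideanSpace ℝ (Fin n) ≃ₜ EuclideanSpace ℝ (Fin n) :=
      (Homeomorph.neg _).trans (Homeomorph.addLeft c)
    have he : ∀ z, e z = c + -z := fun _ => rfl
    set S := e '' T with hSdef
    have hScompact : IsCompact S := hT.image e.continuous
    have hfS : frontier S = e '' frontier T := (e.image_frontier T).symm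
    have hbS : IsConnected (frontier S) := by
      rw [hfS]
      exact hbT.image e e.continuous.continuousOn
    have haS : a ∈ S := by
      refine ⟨b, hb, ?_⟩
      rw [he]
      rw [hc]
      abel
    have hST : volume S = volume T := by
      have h1 : S = (fun z => c - z) ⁻¹' T := by
        ext z
        constructor
        · rintro ⟨t, ht, rfl⟩
          have : c - e t = t := by rw [he]; abel
          simpa [Set.mem_preimage, this] using ht
        · intro hz
          refine ⟨c - z, hz, ?_⟩
          rw [he]
          abel
      rw [h1, (Measure.measurePreserving_sub_left volume c).measure_preimage
        hT.measurableSet.nullMeasurableSet]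
    obtain ⟨k, hk1, hk2⟩ := key_lemma n hn0 K S hK hScompact hbK hbS
      (hST ▸ hvol) ha haS
    rw [hfS] at hk2
    obtain ⟨t, ht, hkt⟩ := hk2
    have hab : c = k + t := by
      rw [← hkt, he]
      abel
    rw [hab]
    exact Set.add_mem_add hk1 ht
end

section
/- Let n ≥ 2 and let K, T ⊆ ℝⁿ be compact sets each with connected boundary. If ∂T ⊆ int(K), then T ⊆ int(K). -/
theorem subset_interior_of_frontier_subset_interior (n : ℕ) (hn : 2 ≤ n)
    (K T : Set (EuclideanSpace ℝ (Fin n)))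
    (hK : IsCompact K) (hT : IsCompact T)
    (hbK : IsConnected (frontier K)) (hbT : IsConnected (frontier T))
    (h : frontier T ⊆ interior K) :
    T ⊆ interior K := by
  haveI : Nonempty (Fin n) := ⟨⟨0, by omega⟩⟩
  haveI : Nontrivial (EuclideanSpace ℝ (Fin n)) := by infer_instance
  -- Any point of T outside interior K lies in interior T
  have fact1 : ∀ y ∈ T, y ∉ interior K → y ∈ interior T := by
    intro y hyT hyK
    by_contra hy
    exact hyK (h ⟨subset_closure hyT, hy⟩)
  by_cases hcase : frontier K ⊆ T
  · -- Case B: frontier K ⊆ T, show closure K ∪ T is a nonempty compact clopen set, contradiction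
    exfalso
    set R : Set (EuclideanSpace ℝ (Fin n)) := closure K ∪ T with hR
    have hRsub : R ⊆ interior K ∪ interior T := by
      rintro y (hy | hy)
      · by_cases hyK : y ∈ interior K
        · exact Or.inl hyK
        · have hfr : y ∈ frontier K := ⟨hy, hyK⟩
          exact Or.inr (fact1 y (hcase hfr) hyK)
      · by_cases hyK : y ∈ interior K
        · exact Or.inl hyK
        · exact Or.inr (fact1 y hy hyK)
    have hRopen : IsOpen R := by
      have : R = interior K ∪ interior T := by
        apply Set.Subset.antisymm hRsub
        exact Set.union_subset_union (interior_subset.trans subset_closure) interior_subset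
      rw [this]
      exact isOpen_interior.union isOpen_interior
    have hRclosed : IsClosed R := (isClosed_closure).union hT.isClosed
    have hRcompact : IsCompact R := by
      rw [hR, hK.isClosed.closure_eq]
      exact hK.union hT
    have hRne : R.Nonempty := by
      obtain ⟨z, hz⟩ := hbK.nonempty
      exact ⟨z, Or.inr (hcase hz)⟩
    rcases (isClopen_iff.mp ⟨hRclosed, hRopen⟩) with h0 | h1
    · rw [h0] at hRne; exact Set.not_nonempty_empty hRne
    · rw [h1] at hRcompact
      exact (IsCompact.ne_univ hRcompact) rfl
  · -- Case A: frontier K ⊄ T; by connectedness frontier K ∩ T = ∅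
    obtain ⟨z, hzf, hzT⟩ := Set.not_subset.mp hcase
    have hdisj : ∀ y ∈ frontier K, y ∉ T := by
      by_contra hcontra
      push_neg at hcontra
      obtain ⟨w, hwf, hwT⟩ := hcontra
      have hcover : frontier K ⊆ interior T ∪ Tᶜ := by
        intro y hy
        by_cases hyT : y ∈ T
        · exact Or.inl (fact1 y hyT hy.2)
        · exact Or.inr hyT
      have := hbK.isPreconnected (interior T) Tᶜ isOpen_interior
        hT.isClosed.isOpen_compl hcover
        ⟨w, hwf, fact1 w hwT hwf.2⟩ ⟨z, hzf, hzT⟩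
      obtain ⟨y, _, hy1, hy2⟩ := this
      exact hy2 (interior_subset hy1)
    -- Now show P := T \ closure K is compact clopen, hence empty
    set P : Set (EuclideanSpace ℝ (Fin n)) := T \ closure K with hP
    have hPopen : IsOpen P := by
      have : P = interior T ∩ (closure K)ᶜ := by
        apply Set.Subset.antisymm
        · rintro y ⟨hyT, hyK⟩
          exact ⟨fact1 y hyT (fun hi => hyK (interior_subset.trans subset_closure hi)), hyK⟩
        · rintro y ⟨hyT, hyK⟩
          exact ⟨interior_subset hyT, hyK⟩
      rw [this]
      exact isOpen_interior.inter isClosed_closure.isOpen_compl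
    have hPclosed : IsClosed P := by
      rw [← closure_subset_iff_isClosed]
      intro y hy
      have hyT : y ∈ T := hT.isClosed.closure_subset_iff.mpr (Set.diff_subset) hy
      have hyNI : y ∉ interior K := by
        intro hyI
        obtain ⟨w, hwI, hwP⟩ := mem_closure_iff.mp hy (interior K) isOpen_interior hyI
        exact hwP.2 (subset_closure (interior_subset hwI))
      refine ⟨hyT, fun hyC => ?_⟩
      exact hdisj y ⟨hyC, hyNI⟩ hyT
    have hPcompact : IsCompact P := hT.of_isClosed_subset hPclosed Set.diff_subset
    have hPempty : P = ∅ := by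
      rcases (isClopen_iff.mp ⟨hPclosed, hPopen⟩) with h0 | h1
      · exact h0
      · exfalso; rw [h1] at hPcompact
        exact (IsCompact.ne_univ hPcompact) rfl
    intro y hyT
    have hyC : y ∈ closure K := by
      by_contra hyC
      have : y ∈ P := ⟨hyT, hyC⟩
      rw [hPempty] at this
      exact this
    by_contra hyI
    exact hdisj y ⟨hyC, hyI⟩ hyT
end

section
/- Let m ≥ 1 be an integer and let x₁, …, x_{m+1} ≥ 0 be real numbers with x₁ + ⋯ + x_m ≤ x_{m+1}. Then (2/(m+1))·√((x₁ + ⋯ + x_m)·x_{m+1}) ≥ (x₁·x₂·⋯·x_{m+1})^{1/(m+1)}. -/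
/-!
Write `a` for the sum of the first `m` numbers and `b = x_{m+1}`. AM-GM bounds their product by
`(a/m)^m`, and since `a ≤ √(ab)` we get `a^m b ≤ √(ab)^(m+1)`. What remains is the constant,
`m^(-m) ≤ (2/(m+1))^(m+1)`, which is Bernoulli's inequality applied to `2m/(m+1) = 1 + (m-1)/(m+1)`.
-/

open Finset

theorem prod_le_arith_mean_pow {ι : Type*} (s : Finset ι) {z : ι → ℝ} (hz : ∀ i ∈ s, 0 ≤ z i) :
    ∏ i ∈ s, z i ≤ ((∑ i ∈ s, z i) / #s) ^ #s := by
  rcases s.eq_empty_or_nonempty with rfl | hs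
  · simp
  have hcard : (0 : ℝ) < #s := by exact_mod_cast hs.card_pos
  have amgm := Real.geom_mean_le_arith_mean s (fun _ ↦ 1) z (fun _ _ ↦ zero_le_one)
    (by simpa using hcard) hz
  simp only [Real.rpow_one, sum_const, nsmul_eq_mul, mul_one, one_mul] at amgm
  rwa [Real.rpow_inv_le_iff_of_pos (prod_nonneg hz)
    (div_nonneg (sum_nonneg hz) hcard.le) hcard, Real.rpow_natCast] at amgm

theorem succ_pow_succ_le_two_pow_mul_pow (m : ℕ) :
    ((m : ℝ) + 1) ^ (m + 1) ≤ 2 ^ (m + 1) * (m : ℝ) ^ m := by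
  rcases Nat.eq_zero_or_pos m with rfl | hm
  · norm_num
  have hm : (0 : ℝ) < m := by exact_mod_cast hm
  have bernoulli := one_add_mul_le_pow (a := ((m : ℝ) - 1) / (m + 1))
    (by rw [le_div_iff₀ (by positivity)]; linarith) (m + 1)
  have bernoulli_rhs : 1 + ((m + 1 : ℕ) : ℝ) * (((m : ℝ) - 1) / (m + 1)) = m := by
    push_cast; field_simp; ring
  have bernoulli_base : 1 + ((m : ℝ) - 1) / (m + 1) = 2 * m / (m + 1) := by field_simp; ring
  rw [bernoulli_rhs, bernoulli_base, div_pow, le_div_iff₀ (by positivity), mul_pow, pow_succ (m : ℝ)] at bernoulli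
  nlinarith

theorem pow_mul_le_sqrt_mul_pow_succ {a b : ℝ} (ha : 0 ≤ a) (hab : a ≤ b) {m : ℕ} (hm : 1 ≤ m) :
    a ^ m * b ≤ √(a * b) ^ (m + 1) := by
  obtain ⟨n, rfl⟩ := Nat.exists_eq_add_of_le' hm
  have hab₀ : 0 ≤ a * b := mul_nonneg ha (ha.trans hab)
  have ha_le : a ≤ √(a * b) := Real.le_sqrt_of_sq_le (by nlinarith)
  calc a ^ (n + 1) * b = a ^ n * (a * b) := by ring
    _ ≤ √(a * b) ^ n * √(a * b) ^ 2 := by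
      rw [Real.sq_sqrt hab₀]
      gcongr
    _ = √(a * b) ^ (n + 1 + 1) := by ring

theorem amgm_type_inequality (m : ℕ) (hm : 1 ≤ m) (x : Fin (m + 1) → ℝ)
    (hx : ∀ i, 0 ≤ x i)
    (hsum : ∑ i : Fin m, x i.castSucc ≤ x (Fin.last m)) :
    (2 / (m + 1)) * Real.sqrt ((∑ i : Fin m, x i.castSucc) * x (Fin.last m)) ≥
      (∏ i, x i) ^ ((1 : ℝ) / (m + 1)) := by
  set a := ∑ i : Fin m, x i.castSucc
  set b := x (Fin.last m)
  have ha : 0 ≤ a := sum_nonneg fun i _ ↦ hx _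
  have amgm : ∏ i : Fin m, x i.castSucc ≤ (a / m) ^ m := by
    simpa using prod_le_arith_mean_pow univ fun (i : Fin m) _ ↦ hx i.castSucc
  have hconst : 1 / (m : ℝ) ^ m ≤ (2 / (m + 1)) ^ (m + 1) := by
    have hm₀ : (0 : ℝ) < m := by exact_mod_cast hm
    rw [div_pow, div_le_div_iff₀ (by positivity) (by positivity), one_mul]
    exact succ_pow_succ_le_two_pow_mul_pow m
  have hprod : ∏ i, x i ≤ (2 / (m + 1) * √(a * b)) ^ (m + 1) :=
    calc ∏ i, x i = (∏ i : Fin m, x i.castSucc) * b := Fin.prod_univ_castSucc x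
      _ ≤ (a / m) ^ m * b := by gcongr; exact hx _
      _ = 1 / (m : ℝ) ^ m * (a ^ m * b) := by ring
      _ ≤ (2 / (m + 1)) ^ (m + 1) * √(a * b) ^ (m + 1) :=
        mul_le_mul hconst (pow_mul_le_sqrt_mul_pow_succ ha hsum hm)
          (mul_nonneg (pow_nonneg ha m) (hx _)) (by positivity)
      _ = (2 / (m + 1) * √(a * b)) ^ (m + 1) := by ring
  rw [ge_iff_le, one_div, Real.rpow_inv_le_iff_of_pos (prod_nonneg fun i _ ↦ hx i)
    (by positivity) (by positivity)]
  exact_mod_cast hprod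
end

section
/- Let λ ∈ [0, 1], let n > 2 be an integer, and define R_n : (0, ∞) → ℝ by R_n(x) = (|(1−λ)x + λ|ⁿ − |(1−λ)x − λ|ⁿ)·(|(1−λ) + λx|ⁿ − |(1−λ) − λx|ⁿ)/xⁿ. Then for every x ∈ (0, ∞) with x ≠ 1, one has R_n(x) > R_n(1), provided λ ∈ (0,1); and in all cases R_n(x) ≥ R_n(1) for all x ∈ (0, ∞). -/
/-!
Write `c = (1 - λ) / λ` and `f t = |t + 1|ⁿ - |t - 1|ⁿ`. By homogeneity
`R_n(x) = λ²ⁿ f(c x) f(c / x)`, so the claim is `f(c)² < f(c x) f(c / x)` for `x ≠ 1`; since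
`f(1 / t) = f(t) / tⁿ` we may assume `c ≥ 1` and `x > 1`. On `[1, ∞)`, `f` is a polynomial with
nonnegative coefficients, so Cauchy–Schwarz gives `f(w)² ≤ f(u) f(v)` whenever `w² = u v`, strictly
when `u ≠ v` because for `n > 2` the coefficients of `tⁿ⁻¹` and `tⁿ⁻³` are positive. This settles
the case `c / x ≥ 1`. If `c / x < 1`, write `f(c / x) = (c / x)ⁿ f(x / c)`; Cauchy–Schwarz gives
`f(c x) f(x / c) ≥ f(x)²`, and the strict monotonicity of `f(t)² / tⁿ` on `[1, ∞)`, a derivative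
computation, finishes the proof.
-/

/-- The function `R_n` from the paper. -/
noncomputable def Rfun (l : ℝ) (n : ℕ) (x : ℝ) : ℝ :=
  (|(1 - l) * x + l| ^ n - |(1 - l) * x - l| ^ n) *
    (|(1 - l) + l * x| ^ n - |(1 - l) - l * x| ^ n) / x ^ n

open Finset

theorem two_mul_lt_add_of_sq_eq_mul {x y z : ℝ} (hx : 0 ≤ x) (hy : 0 ≤ y) (h : z ^ 2 = x * y)
    (hxy : x ≠ y) : 2 * z < x + y := by
  nlinarith [sq_pos_of_ne_zero (sub_ne_zero.2 hxy)]

theorem pow_mul_pow_ne_pow_mul_pow {u v : ℝ} (hu : 0 < u) (hv : 0 < v) (huv : u ≠ v) {i j : ℕ}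
    (hij : i < j) : u ^ i * v ^ j ≠ u ^ j * v ^ i := by
  obtain ⟨d, rfl⟩ := Nat.exists_eq_add_of_lt hij
  intro h
  have h' : u ^ i * v ^ i * v ^ (d + 1) = u ^ i * v ^ i * u ^ (d + 1) := by
    linear_combination h
  exact huv ((pow_left_inj₀ hu.le hv.le d.succ_ne_zero).1 (mul_left_cancel₀ (by positivity) h').symm)

theorem sq_pow_mul_pow_of_sq_eq_mul {u v w : ℝ} (hwuv : w ^ 2 = u * v) (i j : ℕ) :
    (w ^ i * w ^ j) ^ 2 = u ^ i * v ^ j * (u ^ j * v ^ i) := by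
  rw [← pow_add, ← pow_mul, mul_comm, pow_mul, hwuv]
  ring

theorem two_mul_sub_sq_sum_mul_pow (s : Finset ℕ) (a : ℕ → ℝ) (u v w : ℝ) :
    2 * ((∑ k ∈ s, a k * u ^ k) * (∑ k ∈ s, a k * v ^ k) - (∑ k ∈ s, a k * w ^ k) ^ 2) =
      ∑ i ∈ s, ∑ j ∈ s, a i * a j * (u ^ i * v ^ j + u ^ j * v ^ i - 2 * (w ^ i * w ^ j)) := by
  have hswap : ∑ i ∈ s, ∑ j ∈ s, a i * u ^ i * (a j * v ^ j) =
      ∑ i ∈ s, ∑ j ∈ s, a i * a j * (u ^ j * v ^ i) := by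
    rw [sum_comm]
    exact sum_congr rfl fun _ _ => sum_congr rfl fun _ _ => by ring
  rw [sq, sum_mul_sum, sum_mul_sum, mul_sub, two_mul]
  nth_rw 2 [hswap]
  simp only [mul_sum, ← sum_add_distrib, ← sum_sub_distrib]
  exact sum_congr rfl fun _ _ => sum_congr rfl fun _ _ => by ring

section CauchySchwarz

variable {s : Finset ℕ} {a : ℕ → ℝ} {u v w : ℝ}

theorem sq_sum_mul_pow_le (ha : ∀ k ∈ s, 0 ≤ a k) (hu : 0 ≤ u) (hv : 0 ≤ v)
    (hwuv : w ^ 2 = u * v) :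
    (∑ k ∈ s, a k * w ^ k) ^ 2 ≤ (∑ k ∈ s, a k * u ^ k) * (∑ k ∈ s, a k * v ^ k) :=
  sum_sq_le_sum_mul_sum_of_sq_le_mul s (fun k hk => by have := ha k hk; positivity)
    (fun k hk => by have := ha k hk; positivity) fun k _ => le_of_eq <| by
      rw [mul_pow, ← pow_mul, mul_comm k, pow_mul, hwuv]
      ring

theorem sq_sum_mul_pow_lt (ha : ∀ k ∈ s, 0 ≤ a k) {i j : ℕ} (hi : i ∈ s) (hj : j ∈ s)
    (hij : i < j) (hai : 0 < a i) (haj : 0 < a j) (hu : 0 < u) (hv : 0 < v) (huv : u ≠ v)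
    (hwuv : w ^ 2 = u * v) :
    (∑ k ∈ s, a k * w ^ k) ^ 2 < (∑ k ∈ s, a k * u ^ k) * (∑ k ∈ s, a k * v ^ k) := by
  have hterm : ∀ i ∈ s, ∀ j ∈ s,
      0 ≤ a i * a j * (u ^ i * v ^ j + u ^ j * v ^ i - 2 * (w ^ i * w ^ j)) :=
    fun i hi j hj => mul_nonneg (mul_nonneg (ha i hi) (ha j hj)) <| sub_nonneg.2 <|
      two_mul_le_add_of_sq_le_mul (by positivity) (by positivity)
        (sq_pow_mul_pow_of_sq_eq_mul hwuv i j).le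
  have hpos : 0 < ∑ i ∈ s, ∑ j ∈ s,
      a i * a j * (u ^ i * v ^ j + u ^ j * v ^ i - 2 * (w ^ i * w ^ j)) :=
    sum_pos' (fun i hi => sum_nonneg (hterm i hi)) ⟨i, hi, sum_pos' (hterm i hi) ⟨j, hj,
      mul_pos (mul_pos hai haj) <| sub_pos.2 <| two_mul_lt_add_of_sq_eq_mul (by positivity)
        (by positivity) (sq_pow_mul_pow_of_sq_eq_mul hwuv i j)
        (pow_mul_pow_ne_pow_mul_pow hu hv huv hij)⟩⟩
  linarith [two_mul_sub_sq_sum_mul_pow s a u v w]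

end CauchySchwarz

theorem hasDerivAt_sq_add_pow_sub_sub_pow_div_pow (m : ℕ) {t : ℝ} (ht : t ≠ 0) :
    HasDerivAt (fun t : ℝ => ((t + 1) ^ (m + 2) - (t - 1) ^ (m + 2)) ^ 2 / t ^ (m + 2))
      ((m + 2) * ((t + 1) ^ (m + 2) - (t - 1) ^ (m + 2)) * (t ^ 2 - 1) *
        ((t + 1) ^ m - (t - 1) ^ m) / t ^ (m + 3)) t := by
  have hp := (((hasDerivAt_id' t).add_const 1).fun_pow (m + 2)).fun_sub
    (((hasDerivAt_id' t).sub_const 1).fun_pow (m + 2))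
  refine ((hp.fun_pow 2).fun_div (hasDerivAt_pow (m + 2) t) (pow_ne_zero _ ht)).congr_deriv ?_
  simp only [show m + 2 - 1 = m + 1 from rfl, Nat.cast_add, Nat.cast_ofNat]
  field_simp
  ring

theorem strictMonoOn_sq_add_pow_sub_sub_pow_div_pow {n : ℕ} (hn : 2 < n) :
    StrictMonoOn (fun t : ℝ => ((t + 1) ^ n - (t - 1) ^ n) ^ 2 / t ^ n) (Set.Ici 1) := by
  obtain ⟨m, rfl⟩ : ∃ m, n = m + 2 := ⟨n - 2, by omega⟩
  refine strictMonoOn_of_deriv_pos (convex_Ici 1) (ContinuousOn.div (by fun_prop) (by fun_prop)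
    fun t ht => pow_ne_zero _ (zero_lt_one.trans_le ht).ne') fun t ht => ?_
  rw [interior_Ici, Set.mem_Ioi] at ht
  rw [(hasDerivAt_sq_add_pow_sub_sub_pow_div_pow m (zero_lt_one.trans ht).ne').deriv]
  have hgap : ∀ k, 0 < k → 0 < (t + 1) ^ k - (t - 1) ^ k := fun k hk =>
    sub_pos.2 (pow_lt_pow_left₀ (by linarith) (by linarith) hk.ne')
  have := hgap (m + 2) (by omega)
  have := hgap m (by omega)
  have : 0 < t ^ 2 - 1 := by nlinarith
  positivity

noncomputable def absPowDiff (n : ℕ) (t : ℝ) : ℝ := |t + 1| ^ n - |t - 1| ^ n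

noncomputable def absPowDiffCoeff (n k : ℕ) : ℝ := n.choose k * (1 - (-1) ^ (n - k))

section absPowDiff

variable {n : ℕ} {t : ℝ}

theorem abs_add_pow_sub_abs_sub_pow (n : ℕ) (p : ℝ) {q : ℝ} (hq : 0 < q) :
    |p + q| ^ n - |p - q| ^ n = q ^ n * absPowDiff n (p / q) := by
  have hp : p = q * (p / q) := by field_simp
  rw [absPowDiff, hp, ← mul_add_one, ← mul_sub_one, abs_mul, abs_mul, abs_of_pos hq, mul_pow,
    mul_pow, ← mul_sub, ← hp]

theorem absPowDiff_inv (n : ℕ) (ht : 0 < t) : absPowDiff n t⁻¹ = absPowDiff n t / t ^ n := by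
  rw [eq_div_iff (by positivity), mul_comm, ← one_div, ← abs_add_pow_sub_abs_sub_pow n 1 ht,
    absPowDiff, add_comm, abs_sub_comm]

theorem absPowDiff_of_one_le (ht : 1 ≤ t) : absPowDiff n t = (t + 1) ^ n - (t - 1) ^ n := by
  rw [absPowDiff, abs_of_nonneg (by linarith), abs_of_nonneg (by linarith)]

theorem absPowDiff_eq_sum (ht : 1 ≤ t) :
    absPowDiff n t = ∑ k ∈ range (n + 1), absPowDiffCoeff n k * t ^ k := by
  rw [absPowDiff_of_one_le ht, sub_eq_add_neg t, add_pow, add_pow, ← sum_sub_distrib]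
  refine sum_congr rfl fun k _ => ?_
  rw [absPowDiffCoeff]
  ring

theorem absPowDiffCoeff_nonneg (n k : ℕ) : 0 ≤ absPowDiffCoeff n k := by
  rw [absPowDiffCoeff]
  rcases neg_one_pow_eq_or ℝ (n - k) with h | h <;> rw [h] <;> positivity

theorem absPowDiffCoeff_pos {k : ℕ} (hk : k ≤ n) (hodd : Odd (n - k)) :
    0 < absPowDiffCoeff n k := by
  rw [absPowDiffCoeff, hodd.neg_one_pow]
  have := Nat.choose_pos hk
  positivity

theorem strictMonoOn_absPowDiff_sq_div_pow (hn : 2 < n) :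
    StrictMonoOn (fun t => absPowDiff n t ^ 2 / t ^ n) (Set.Ici 1) :=
  (strictMonoOn_sq_add_pow_sub_sub_pow_div_pow hn).congr fun _ ht => by
    rw [absPowDiff_of_one_le ht]

theorem absPowDiff_sq_le_of_one_le {u v w : ℝ} (hu : 1 ≤ u) (hv : 1 ≤ v) (hw : 1 ≤ w)
    (hwuv : w ^ 2 = u * v) : absPowDiff n w ^ 2 ≤ absPowDiff n u * absPowDiff n v := by
  rw [absPowDiff_eq_sum hu, absPowDiff_eq_sum hv, absPowDiff_eq_sum hw]
  exact sq_sum_mul_pow_le (fun k _ => absPowDiffCoeff_nonneg n k) (by linarith) (by linarith) hwuv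

theorem absPowDiff_sq_lt_of_one_le (hn : 2 < n) {c x : ℝ} (hc : 1 ≤ c) (hx : 1 < x) :
    absPowDiff n c ^ 2 < absPowDiff n (c * x) * absPowDiff n (c / x) := by
  have hc0 : 0 < c := by linarith
  have hx0 : 0 < x := by linarith
  have hcx : 1 ≤ c * x := by nlinarith
  rcases le_or_gt x c with hxc | hcx'
  · have hcdx : 1 ≤ c / x := (one_le_div hx0).2 hxc
    have hne : c / x ≠ c * x :=
      ((div_lt_self hc0 hx).trans (lt_mul_of_one_lt_right hc0 hx)).ne
    rw [absPowDiff_eq_sum hc, absPowDiff_eq_sum hcx, absPowDiff_eq_sum hcdx]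
    refine sq_sum_mul_pow_lt (fun k _ => absPowDiffCoeff_nonneg n k) (i := n - 3) (j := n - 1)
      (mem_range.2 (by omega)) (mem_range.2 (by omega)) (by omega)
      (absPowDiffCoeff_pos (by omega) ?_) (absPowDiffCoeff_pos (by omega) ?_)
      (by positivity) (by positivity) hne.symm (by field_simp)
    · rw [show n - (n - 3) = 3 by omega]; decide
    · rw [show n - (n - 1) = 1 by omega]; decide
  · have hmono : absPowDiff n c ^ 2 / c ^ n < absPowDiff n x ^ 2 / x ^ n :=
      strictMonoOn_absPowDiff_sq_div_pow hn hc hx.le hcx'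
    have hcs : absPowDiff n x ^ 2 ≤ absPowDiff n (c * x) * absPowDiff n (x / c) :=
      absPowDiff_sq_le_of_one_le hcx ((one_le_div hc0).2 hcx'.le) hx.le (by field_simp)
    rw [← inv_div, absPowDiff_inv n (by positivity)]
    calc absPowDiff n c ^ 2 = c ^ n * (absPowDiff n c ^ 2 / c ^ n) := by field_simp
      _ < c ^ n * (absPowDiff n x ^ 2 / x ^ n) := by gcongr
      _ ≤ c ^ n * (absPowDiff n (c * x) * absPowDiff n (x / c) / x ^ n) := by gcongr
      _ = absPowDiff n (c * x) * (absPowDiff n (x / c) / (x / c) ^ n) := by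
        rw [div_pow]; field_simp

theorem absPowDiff_sq_lt (hn : 2 < n) {c x : ℝ} (hc : 0 < c) (hx : 0 < x) (hx1 : x ≠ 1) :
    absPowDiff n c ^ 2 < absPowDiff n (c * x) * absPowDiff n (c / x) := by
  wlog hx1' : 1 < x generalizing x
  · have hinv := this (inv_pos.2 hx) (inv_ne_one.2 hx1)
      ((one_lt_inv₀ hx).2 (lt_of_le_of_ne (not_lt.1 hx1') hx1))
    rwa [← div_eq_mul_inv, div_inv_eq_mul, mul_comm] at hinv
  wlog hc1 : 1 ≤ c generalizing c
  · have hinv := this (inv_pos.2 hc) ((one_le_inv₀ hc).2 (not_le.1 hc1).le)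
    rw [show c⁻¹ * x = (c / x)⁻¹ by field_simp, show c⁻¹ / x = (c * x)⁻¹ by field_simp,
      absPowDiff_inv n hc, absPowDiff_inv n (by positivity), absPowDiff_inv n (by positivity),
      div_pow, div_mul_div_comm, ← mul_pow, show c / x * (c * x) = c ^ 2 by field_simp,
      pow_right_comm, mul_comm (absPowDiff n _), div_lt_div_iff_of_pos_right (by positivity)]
      at hinv
    exact hinv
  exact absPowDiff_sq_lt_of_one_le hn hc1 hx1'

end absPowDiff

theorem Rfun_eq_pow_mul_absPowDiff (n : ℕ) {l x : ℝ} (hl : 0 < l) (hx : 0 < x) :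
    Rfun l n x =
      l ^ (2 * n) * (absPowDiff n ((1 - l) / l * x) * absPowDiff n ((1 - l) / l / x)) := by
  rw [Rfun, abs_add_pow_sub_abs_sub_pow n _ hl, abs_add_pow_sub_abs_sub_pow n _ (mul_pos hl hx),
    mul_div_right_comm, div_div, mul_comm l x]
  field_simp
  ring

theorem R_n_minimum_at_one (l : ℝ) (hl : l ∈ Set.Icc (0 : ℝ) 1) (n : ℕ) (hn : 2 < n) :
    (∀ x : ℝ, 0 < x → Rfun l n x ≥ Rfun l n 1) ∧
    (l ∈ Set.Ioo (0 : ℝ) 1 → ∀ x : ℝ, 0 < x → x ≠ 1 → Rfun l n x > Rfun l n 1) := by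
  have hstrict : l ∈ Set.Ioo (0 : ℝ) 1 → ∀ x : ℝ, 0 < x → x ≠ 1 → Rfun l n x > Rfun l n 1 := by
    rintro ⟨hl0, hl1⟩ x hx hx1
    rw [Rfun_eq_pow_mul_absPowDiff n hl0 hx, Rfun_eq_pow_mul_absPowDiff n hl0 one_pos, mul_one,
      div_one, ← sq]
    exact mul_lt_mul_of_pos_left (absPowDiff_sq_lt hn (div_pos (by linarith) hl0) hx hx1)
      (by positivity)
  refine ⟨fun x hx => ?_, hstrict⟩
  obtain ⟨hl0, hl1⟩ := hl
  rcases hl0.eq_or_lt with rfl | hl0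
  · simp [Rfun]
  rcases hl1.lt_or_eq with hl1 | rfl
  · rcases eq_or_ne x 1 with rfl | hx1
    · exact le_rfl
    · exact (hstrict ⟨hl0, hl1⟩ x hx hx1).le
  · simp [Rfun]
end

section
/- Let n ≥ 2 and let K, T ⊆ ℝⁿ be compact sets each with connected boundary. If both Minkowski differences K ⊖ T and T ⊖ K are empty, then ∂K + ∂T = K + T. -/
open Pointwise

theorem frontier_sum_eq_sum_of_minkDiff_empty (n : ℕ) (hn : 2 ≤ n)
    (K T : Set (EuclideanSpace ℝ (Fin n)))
    (hK : IsCompact K) (hT : IsCompact T)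
    (hbK : IsConnected (frontier K)) (hbT : IsConnected (frontier T))
    (h1 : minkDiff K T = ∅) (h2 : minkDiff T K = ∅) :
    frontier K + frontier T = K + T := by
  have hKc : IsClosed K := hK.isClosed
  have hTc : IsClosed T := hT.isClosed
  haveI : Nonempty (Fin n) := ⟨⟨0, by omega⟩⟩
  haveI : Nontrivial (EuclideanSpace ℝ (Fin n)) := inferInstance
  apply Set.Subset.antisymm
  · exact Set.add_subset_add hKc.frontier_subset hTc.frontier_subset
  intro c hc
  rw [Set.mem_add] at hc
  obtain ⟨x, hx, y, hy, rfl⟩ := hc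
  by_contra hcon
  obtain ⟨c, hcdef⟩ : ∃ c, c = x + y := ⟨_, rfl⟩
  rw [← hcdef] at hcon
  -- no decomposition into boundary points
  have hmem : ∀ p ∈ frontier K, c - p ∉ frontier T := by
    intro p hp hq
    exact hcon (Set.mem_add.mpr ⟨p, hp, c - p, hq, by abel⟩)
  have contsub : Continuous (fun z : EuclideanSpace ℝ (Fin n) => c - z) := by
    continuity
  have hsubinv : ∀ z : EuclideanSpace ℝ (Fin n), c - (c - z) = z := by
    intro z; abel
  -- points of closed sets off the frontier are interior
  have hKsplit : ∀ z, z ∉ frontier K → (z ∈ interior K ∨ z ∉ K) := by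
    intro z hz
    by_cases h : z ∈ K
    · left
      by_contra h'
      exact hz ⟨subset_closure h, h'⟩
    · exact Or.inr h
  have hTsplit : ∀ z, z ∉ frontier T → (z ∈ interior T ∨ z ∉ T) := by
    intro z hz
    by_cases h : z ∈ T
    · left
      by_contra h'
      exact hz ⟨subset_closure h, h'⟩
    · exact Or.inr h
  -- key dichotomies via connectedness of the boundaries
  have HT : (∀ q ∈ frontier T, c - q ∈ interior K) ∨ (∀ q ∈ frontier T, c - q ∉ K) := by
    have := hbT.isPreconnected.subset_or_subset
      (u := (fun z : EuclideanSpace ℝ (Fin n) => c - z) ⁻¹' interior K)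
      (v := (fun z : EuclideanSpace ℝ (Fin n) => c - z) ⁻¹' Kᶜ)
      (isOpen_interior.preimage contsub) (hKc.isOpen_compl.preimage contsub)
      ?_ ?_
    · rcases this with h | h
      · exact Or.inl fun q hq => h hq
      · exact Or.inr fun q hq => h hq
    · rw [Set.disjoint_iff]
      rintro z ⟨h1', h2'⟩
      exact h2' (interior_subset h1')
    · intro q hq
      have hnotb : c - q ∉ frontier K := by
        intro hb
        exact hmem _ hb (by rw [hsubinv q]; exact hq)
      rcases hKsplit _ hnotb with h | h
      · exact Or.inl h
      · exact Or.inr h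
  have HK : (∀ p ∈ frontier K, c - p ∈ interior T) ∨ (∀ p ∈ frontier K, c - p ∉ T) := by
    have := hbK.isPreconnected.subset_or_subset
      (u := (fun z : EuclideanSpace ℝ (Fin n) => c - z) ⁻¹' interior T)
      (v := (fun z : EuclideanSpace ℝ (Fin n) => c - z) ⁻¹' Tᶜ)
      (isOpen_interior.preimage contsub) (hTc.isOpen_compl.preimage contsub)
      ?_ ?_
    · rcases this with h | h
      · exact Or.inl fun q hq => h hq
      · exact Or.inr fun q hq => h hq
    · rw [Set.disjoint_iff]
      rintro z ⟨h1', h2'⟩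
      exact h2' (interior_subset h1')
    · intro p hp
      rcases hTsplit _ (hmem p hp) with h | h
      · exact Or.inl h
      · exact Or.inr h
  -- witnesses from the empty Minkowski differences
  have hE1 : ∃ t ∈ T, c - t ∉ interior K := by
    by_contra h
    push_neg at h
    have : c ∈ minkDiff K T := h
    rw [h1] at this
    exact this
  have hE2 : ∃ k ∈ K, c - k ∉ interior T := by
    by_contra h
    push_neg at h
    have : c ∈ minkDiff T K := h
    rw [h2] at this
    exact this
  -- nonempty proper clopen sets do not exist in ℝⁿ
  have clopen_contra : ∀ S : Set (EuclideanSpace ℝ (Fin n)),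
      IsOpen S → IsClosed S → S.Nonempty → S ≠ Set.univ → False := by
    intro S ho hcl hne hnu
    rcases isClopen_iff.mp ⟨hcl, ho⟩ with h | h
    · rw [h] at hne
      exact Set.not_nonempty_empty hne
    · exact hnu h
  -- the preimage of T under z ↦ c - z is compact
  have hTpre : IsCompact ((fun z : EuclideanSpace ℝ (Fin n) => c - z) ⁻¹' T) := by
    have : (fun z : EuclideanSpace ℝ (Fin n) => c - z) ⁻¹' T
        = (fun z : EuclideanSpace ℝ (Fin n) => c - z) '' T := by
      ext z
      constructor
      · intro hz
        exact ⟨c - z, hz, hsubinv z⟩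
      · rintro ⟨t, ht, rfl⟩
        simpa [hsubinv t] using ht
    rw [this]
    exact hT.image contsub
  rcases HT with HTl | HTr <;> rcases HK with HKl | HKr
  · -- Case A : c - ∂T ⊆ int K and c - ∂K ⊆ int T
    have heq : {z : EuclideanSpace ℝ (Fin n) | z ∉ K ∧ c - z ∉ T}
        = {z | z ∉ interior K ∧ c - z ∉ interior T} := by
      ext z
      constructor
      · rintro ⟨h1', h2'⟩
        exact ⟨fun h => h1' (interior_subset h), fun h => h2' (interior_subset h)⟩
      · rintro ⟨h1', h2'⟩
        constructor
        · intro hzK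
          exact h2' (HKl z ⟨subset_closure hzK, h1'⟩)
        · intro hzT
          have := HTl _ ⟨subset_closure hzT, h2'⟩
          rw [hsubinv z] at this
          exact h1' this
    obtain ⟨z0, hz0⟩ := Set.ne_univ_iff_exists_notMem _ |>.mp (hK.union hTpre).ne_univ
    apply clopen_contra {z | z ∉ K ∧ c - z ∉ T}
    · exact IsOpen.inter hKc.isOpen_compl (hTc.isOpen_compl.preimage contsub)
    · rw [heq]
      exact IsClosed.inter (isClosed_compl_iff.mpr isOpen_interior)
        ((isClosed_compl_iff.mpr isOpen_interior).preimage contsub)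
    · exact ⟨z0, fun h => hz0 (Set.mem_union_left _ h),
        fun h => hz0 (Set.mem_union_right _ h)⟩
    · intro h
      have hxS : x ∈ {z : EuclideanSpace ℝ (Fin n) | z ∉ K ∧ c - z ∉ T} := by
        rw [h]; trivial
      exact hxS.1 hx
  · -- Case B : c - ∂T ⊆ int K and c - ∂K ∩ T = ∅
    have heq : {z : EuclideanSpace ℝ (Fin n) | z ∉ interior K ∧ c - z ∈ T}
        = {z | z ∉ K ∧ c - z ∈ interior T} := by
      ext z
      constructor
      · rintro ⟨h1', h2'⟩
        have hz2 : c - z ∉ frontier T := by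
          intro hfr
          have := HTl _ hfr
          rw [hsubinv z] at this
          exact h1' this
        have hzint : c - z ∈ interior T := by
          rcases hTsplit _ hz2 with h | h
          · exact h
          · exact absurd h2' h
        exact ⟨fun hzK => HKr z ⟨subset_closure hzK, h1'⟩ h2', hzint⟩
      · rintro ⟨h1', h2'⟩
        exact ⟨fun h => h1' (interior_subset h), interior_subset h2'⟩
    obtain ⟨t, ht, hnt⟩ := hE1
    apply clopen_contra {z | z ∉ interior K ∧ c - z ∈ T}
    · rw [heq]
      exact IsOpen.inter hKc.isOpen_compl (isOpen_interior.preimage contsub)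
    · exact IsClosed.inter (isClosed_compl_iff.mpr isOpen_interior) (hTc.preimage contsub)
    · exact ⟨c - t, hnt, by simpa [hsubinv t] using ht⟩
    · intro h
      have hxS : x ∈ {z : EuclideanSpace ℝ (Fin n) | z ∉ interior K ∧ c - z ∈ T} := by
        rw [h]; trivial
      rw [heq] at hxS
      exact hxS.1 hx
  · -- Case C : c - ∂T ∩ K = ∅ and c - ∂K ⊆ int T
    have heq : {z : EuclideanSpace ℝ (Fin n) | c - z ∉ interior T ∧ z ∈ K}
        = {z | c - z ∉ T ∧ z ∈ interior K} := by
      ext z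
      constructor
      · rintro ⟨h1', h2'⟩
        have hz2 : z ∉ frontier K := fun hfr => h1' (HKl z hfr)
        have hzint : z ∈ interior K := by
          rcases hKsplit _ hz2 with h | h
          · exact h
          · exact absurd h2' h
        refine ⟨?_, hzint⟩
        intro hzT
        have hfr : c - z ∉ frontier T := fun hfr => by
          have := HTr _ hfr
          rw [hsubinv z] at this
          exact this h2'
        rcases hTsplit _ hfr with h | h
        · exact h1' h
        · exact h hzT
      · rintro ⟨h1', h2'⟩
        exact ⟨fun h => h1' (interior_subset h), interior_subset h2'⟩
    obtain ⟨k, hk, hnk⟩ := hE2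
    apply clopen_contra {z | c - z ∉ interior T ∧ z ∈ K}
    · rw [heq]
      exact IsOpen.inter (hTc.isOpen_compl.preimage contsub) isOpen_interior
    · exact IsClosed.inter
        (((isClosed_compl_iff.mpr isOpen_interior)).preimage contsub) hKc
    · exact ⟨k, hnk, hk⟩
    · intro h
      have hxS : x ∈ {z : EuclideanSpace ℝ (Fin n) | c - z ∉ interior T ∧ z ∈ K} := by
        rw [h]; trivial
      rw [heq] at hxS
      refine hxS.1 ?_
      have hxy : c - x = y := by rw [hcdef]; abel
      rw [hxy]
      exact hy
  · -- Case D : both empty intersections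
    have heq : {z : EuclideanSpace ℝ (Fin n) | z ∈ K ∧ c - z ∈ T}
        = {z | z ∈ interior K ∧ c - z ∈ interior T} := by
      ext z
      constructor
      · rintro ⟨h1', h2'⟩
        have hz1 : z ∉ frontier K := fun hfr => HKr z hfr h2'
        have hz2 : c - z ∉ frontier T := fun hfr => by
          have := HTr _ hfr
          rw [hsubinv z] at this
          exact this h1'
        rcases hKsplit _ hz1 with h | h
        · rcases hTsplit _ hz2 with h' | h'
          · exact ⟨h, h'⟩
          · exact absurd h2' h'
        · exact absurd h1' h
      · rintro ⟨h1', h2'⟩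
        exact ⟨interior_subset h1', interior_subset h2'⟩
    obtain ⟨z0, hz0⟩ := Set.ne_univ_iff_exists_notMem _ |>.mp hK.ne_univ
    apply clopen_contra {z | z ∈ K ∧ c - z ∈ T}
    · rw [heq]
      exact IsOpen.inter isOpen_interior (isOpen_interior.preimage contsub)
    · exact IsClosed.inter hKc (hTc.preimage contsub)
    · refine ⟨x, hx, ?_⟩
      have hxy : c - x = y := by rw [hcdef]; abel
      rw [hxy]
      exact hy
    · intro h
      have : z0 ∈ {z : EuclideanSpace ℝ (Fin n) | z ∈ K ∧ c - z ∈ T} := by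
        rw [h]; trivial
      exact hz0 this.1
end

section
/- Let n ≥ 2 and let K ⊆ ℝⁿ be a compact set with connected boundary. Then ∂K + ∂K = K + K. -/
open Pointwise Set

-- max-norm point of a closed set lies on its frontier
lemma max_norm_mem_frontier {E : Type*} [NormedAddCommGroup E] [NormedSpace ℝ E]
    [Nontrivial E] {K : Set E} (hK : IsClosed K) {x : E} (hx : x ∈ K)
    (hmax : ∀ y ∈ K, ‖y‖ ≤ ‖x‖) : x ∈ frontier K := by
  rw [frontier, hK.closure_eq]
  refine ⟨hx, fun hint => ?_⟩
  obtain ⟨ε, hε, hball⟩ := Metric.isOpen_iff.1 isOpen_interior x hint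
  rcases eq_or_ne x 0 with rfl | hx0
  · obtain ⟨y, hy⟩ := exists_ne (0 : E)
    set p := (ε / 2 / ‖y‖) • y with hp
    have hyn : ‖y‖ > 0 := norm_pos_iff.2 hy
    have hpn : ‖p‖ = ε / 2 := by
      rw [hp, norm_smul, Real.norm_eq_abs, abs_of_pos (by positivity)]
      field_simp
    have : p ∈ K := interior_subset (hball (by
      simp [Metric.mem_ball, dist_eq_norm, hpn]; linarith))
    have := hmax p this
    simp [hpn] at this
    linarith
  · set p := (1 + ε / (2 * ‖x‖)) • x with hp
    have hxn : ‖x‖ > 0 := norm_pos_iff.2 hx0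
    have hd : dist p x = ε / 2 := by
      rw [dist_eq_norm, hp]
      have : (1 + ε / (2 * ‖x‖)) • x - x = (ε / (2 * ‖x‖)) • x := by
        rw [add_smul, one_smul]; abel
      rw [this, norm_smul, Real.norm_eq_abs, abs_of_pos (by positivity)]
      field_simp
    have hpK : p ∈ K := interior_subset (hball (by rw [Metric.mem_ball, hd]; linarith))
    have hpn : ‖p‖ = ‖x‖ + ε / 2 := by
      rw [hp, norm_smul, Real.norm_eq_abs, abs_of_pos (by positivity)]
      field_simp
    have := hmax p hpK
    rw [hpn] at this
    linarith

theorem frontier_self_sum (n : ℕ) (hn : 2 ≤ n)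
    (K : Set (EuclideanSpace ℝ (Fin n)))
    (hK : IsCompact K) (hbK : IsConnected (frontier K)) :
    frontier K + frontier K = K + K := by
  haveI : Nonempty (Fin n) := ⟨⟨0, by omega⟩⟩
  have hcl : IsClosed K := hK.isClosed
  have hfK : frontier K ⊆ K := by
    rw [frontier, hcl.closure_eq]; exact diff_subset
  apply Subset.antisymm (add_subset_add hfK hfK)
  rintro c ⟨a, ha, b, hb, rfl⟩
  set c := a + b with hc
  -- the homeomorphism x ↦ c - x
  set φ : EuclideanSpace ℝ (Fin n) ≃ₜ EuclideanSpace ℝ (Fin n) :=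
    (Homeomorph.neg _).trans (Homeomorph.addLeft c) with hφ
  have hφx : ∀ x, φ x = c - x := fun x => by
    simp [hφ, sub_eq_add_neg]
  have hφφ : ∀ x, φ (φ x) = x := fun x => by simp [hφx]
  set L : Set (EuclideanSpace ℝ (Fin n)) := φ '' K with hL
  have hLc : IsCompact L := hK.image φ.continuous
  have hLcl : IsClosed L := hLc.isClosed
  have hfL : frontier L = φ '' frontier K := (φ.image_frontier K).symm
  have hiL : interior L = φ '' interior K := (φ.image_interior K).symm
  have hbL : IsConnected (frontier L) := by
    rw [hfL]; exact hbK.image φ φ.continuous.continuousOn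
  have haL : a ∈ L := ⟨b, hb, by rw [hφx]; simp [hc]⟩
  -- it suffices to find a common frontier point
  suffices h : (frontier K ∩ frontier L).Nonempty by
    obtain ⟨z, hz1, hz2⟩ := h
    rw [hfL] at hz2
    obtain ⟨w, hw, hwz⟩ := hz2
    refine ⟨z, hz1, w, hw, ?_⟩
    rw [hφx] at hwz
    have : w = c - z := by rw [← hwz]; abel
    rw [this]
    show z + (c - z) = c
    abel
  by_contra hdis
  rw [not_nonempty_iff_eq_empty] at hdis
  -- connected frontier disjoint from the other frontier, touching the set,
  -- must lie in the interior
  have conn : ∀ (A B : Set (EuclideanSpace ℝ (Fin n))), IsClosed A →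
      IsConnected (frontier B) → frontier B ∩ frontier A = ∅ →
      (frontier B ∩ A).Nonempty → frontier B ⊆ interior A := by
    intro A B hA hcB hd hne
    obtain ⟨y, hy1, hy2⟩ := hne
    have hcover : frontier B ⊆ interior A ∪ (closure A)ᶜ := by
      intro z hz
      by_cases h1 : z ∈ interior A
      · exact Or.inl h1
      · refine Or.inr fun h2 => ?_
        have hmem : z ∈ frontier B ∩ frontier A := ⟨hz, h2, h1⟩
        rw [hd] at hmem
        exact hmem
    refine hcB.isPreconnected.subset_left_of_subset_union isOpen_interior
      isClosed_closure.isOpen_compl ?_ hcover ⟨y, hy1, ?_⟩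
    · exact disjoint_compl_right.mono_left (interior_subset.trans subset_closure)
    · by_contra h
      have hmem : y ∈ frontier B ∩ frontier A := ⟨hy1, subset_closure hy2, h⟩
      rw [hd] at hmem
      exact hmem
  have key : frontier K ⊆ interior L ∧ frontier L ⊆ interior K := by
    have hKL : (K ∩ L).Nonempty := ⟨a, ha, haL⟩
    have hKLne : K ∩ L ≠ univ := fun h => by
      have := hK.inter_right hLcl
      rw [h] at this
      exact NoncompactSpace.noncompact_univ this
    have hfKL : (frontier (K ∩ L)).Nonempty := by
      rw [nonempty_iff_ne_empty]
      intro h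
      rcases frontier_eq_empty_iff.1 h with h' | h'
      · exact hKL.ne_empty h'
      · exact hKLne h'
    obtain ⟨x₀, hx₀⟩ := hfKL
    have hmem := frontier_inter_subset K L hx₀
    rw [hcl.closure_eq, hLcl.closure_eq] at hmem
    have hdis' : frontier L ∩ frontier K = ∅ := by
      rw [← hdis]; exact inter_comm _ _
    rcases hmem with ⟨h1, h2⟩ | ⟨h1, h2⟩
    · have hKiL : frontier K ⊆ interior L := conn L K hLcl hbK hdis ⟨x₀, h1, h2⟩
      refine ⟨hKiL, ?_⟩
      rw [hfL]
      rintro z ⟨w, hw, rfl⟩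
      have hwL : w ∈ interior L := hKiL hw
      rw [hiL] at hwL
      obtain ⟨u, hu, huw⟩ := hwL
      rw [← huw, hφφ]
      exact hu
    · have hLiK : frontier L ⊆ interior K := conn K L hcl hbL hdis' ⟨x₀, h2, h1⟩
      refine ⟨?_, hLiK⟩
      rw [hiL]
      intro z hz
      have : φ z ∈ frontier L := by rw [hfL]; exact ⟨z, hz, rfl⟩
      have := hLiK this
      exact ⟨φ z, this, hφφ z⟩
  -- contradiction via max-norm point of K ∪ L
  obtain ⟨x, hxKL, hxmax⟩ := (hK.union hLc).exists_isMaxOn ⟨a, Or.inl ha⟩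
    continuous_norm.continuousOn
  replace hxmax : ∀ y ∈ K ∪ L, ‖y‖ ≤ ‖x‖ := fun y hy => hxmax hy
  rcases hxKL with hxK | hxL
  · have h1 : x ∈ frontier K :=
      max_norm_mem_frontier hcl hxK (fun y hy => hxmax y (Or.inl hy))
    have h2 : x ∈ interior L := key.1 h1
    have h3 : x ∈ frontier L :=
      max_norm_mem_frontier hLcl (interior_subset h2) (fun y hy => hxmax y (Or.inr hy))
    exact h3.2 h2
  · have h1 : x ∈ frontier L :=
      max_norm_mem_frontier hLcl hxL (fun y hy => hxmax y (Or.inr hy))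
    have h2 : x ∈ interior K := key.2 h1
    have h3 : x ∈ frontier K :=
      max_norm_mem_frontier hcl (interior_subset h2) (fun y hy => hxmax y (Or.inl hy))
    exact h3.2 h2
end
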